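/- arXiv:2112.09827 — 3 statements merged into one kernel-verified Lean document; each statement's English description precedes it below -/
import Mathlib

section
/- Let H be a real inner product space, N a positive integer, ε ∈ (0,1], and let v_1,…,v_N ∈ H, o ∈ H, R ∈ ℝ, and α, β, ω ∈ ℝ^N satisfy the OC-SVC KKT conditions: ∑_{n=1}^N α_n = 1; α_n + β_n = 1/(N ε) for all n; α_n ≥ 0, β_n ≥ 0, ω_n ≥ 0 for all n; ω_n β_n = 0 for all n; and ‖v_n − o‖² ≤ R² + ω_n for all n. Then the number of indices n with ‖v_n − o‖² ≤ R² is at least (1 − ε) N; i.e., the OC-SVC sphere {v : ‖v − o‖² ≤ R²} covers at least a fraction 1 − ε of the N samples. -/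
/-!
A sample outside the sphere has positive slack `ω n`, so complementary slackness forces
`β n = 0` and hence `α n = 1 / (N ε)`. Since the `α n` are nonnegative and sum to `1`, at most
`N ε` samples can carry that much weight, so at most `N ε` samples lie outside the sphere.
-/

open Finset

theorem Finset.card_nsmul_le_sum_of_subset {ι M : Type*} [AddCommMonoid M] [PartialOrder M]
    [IsOrderedAddMonoid M] {s t : Finset ι} {f : ι → M} {c : M} (hts : t ⊆ s)
    (hf : ∀ i ∈ s, 0 ≤ f i) (hc : ∀ i ∈ t, c ≤ f i) :
    #t • c ≤ ∑ i ∈ s, f i :=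
  (card_nsmul_le_sum t f c hc).trans (sum_le_sum_of_subset_of_nonneg hts fun i hi _ => hf i hi)

theorem card_le_inv_of_le_of_sum_eq_one {ι : Type*} [Fintype ι] {α : ι → ℝ}
    (hα : ∀ i, 0 ≤ α i) (hsum : ∑ i, α i = 1) {t : Finset ι} {c : ℝ} (hc : 0 < c)
    (ht : ∀ i ∈ t, c ≤ α i) : (#t : ℝ) ≤ c⁻¹ := by
  have h : #t • c ≤ ∑ i, α i := card_nsmul_le_sum_of_subset (subset_univ t) (fun i _ => hα i) ht
  rw [hsum, nsmul_eq_mul, ← le_div_iff₀ hc, one_div] at h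
  exact h

theorem ocsvc_sphere_covers_general
    {H : Type*} [NormedAddCommGroup H] [InnerProductSpace ℝ H]
    {N : ℕ} (hN : 0 < N) (ε : ℝ) (hε0 : 0 < ε)
    (v : Fin N → H) (o : H) (R : ℝ) (α β ω : Fin N → ℝ)
    (hsum : ∑ n, α n = 1)
    (hαβ : ∀ n, α n + β n = 1 / ((N : ℝ) * ε))
    (hα : ∀ n, 0 ≤ α n)
    (hcs : ∀ n, ω n * β n = 0)
    (hfeas : ∀ n, ‖v n - o‖ ^ 2 ≤ R ^ 2 + ω n) :
    (1 - ε) * (N : ℝ)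
      ≤ ((Finset.univ.filter fun n : Fin N => ‖v n - o‖ ^ 2 ≤ R ^ 2).card : ℝ) := by
  set P : Fin N → Prop := fun n => ‖v n - o‖ ^ 2 ≤ R ^ 2
  have houtlier : ∀ n ∈ univ.filter (fun n => ¬ P n), 1 / ((N : ℝ) * ε) ≤ α n := by
    intro n hn
    have hout : ¬ P n := (mem_filter.mp hn).2
    have hωpos : 0 < ω n := by
      by_contra! h
      exact hout (by linarith [hfeas n])
    have hβ0 : β n = 0 := (mul_eq_zero.mp (hcs n)).resolve_left hωpos.ne'
    linarith [hαβ n]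
  have hcount : (#(univ.filter fun n => ¬ P n) : ℝ) ≤ N * ε := by
    simpa only [one_div, inv_inv] using
      card_le_inv_of_le_of_sum_eq_one hα hsum (by positivity) houtlier
  have hsplit : (#(univ.filter P) : ℝ) + #(univ.filter fun n => ¬ P n) = N := by
    exact_mod_cast (card_filter_add_card_filter_not (s := univ) P).trans (card_fin N)
  linarith

/-- Under the OC-SVC KKT conditions, the sphere `{v : ‖v - o‖² ≤ R²}` covers at
least a fraction `1 - ε` of the `N` samples. -/
theorem ocsvc_sphere_covers
    {H : Type*} [NormedAddCommGroup H] [InnerProductSpace ℝ H]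
    {N : ℕ} (hN : 0 < N) (ε : ℝ) (hε0 : 0 < ε) (hε1 : ε ≤ 1)
    (v : Fin N → H) (o : H) (R : ℝ) (α β ω : Fin N → ℝ)
    (hsum : ∑ n, α n = 1)
    (hαβ : ∀ n, α n + β n = 1 / ((N : ℝ) * ε))
    (hα : ∀ n, 0 ≤ α n) (hβ : ∀ n, 0 ≤ β n) (hω : ∀ n, 0 ≤ ω n)
    (hcs : ∀ n, ω n * β n = 0)
    (hfeas : ∀ n, ‖v n - o‖ ^ 2 ≤ R ^ 2 + ω n) :
    (1 - ε) * (N : ℝ)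
      ≤ ((Finset.univ.filter fun n : Fin N => ‖v n - o‖ ^ 2 ≤ R ^ 2).card : ℝ) :=
  ocsvc_sphere_covers_general hN ε hε0 v o R α β ω hsum hαβ hα hcs hfeas
end

section
/- Let D and N be positive integers, W a D×D real matrix, α ∈ ℝ^N with α_n ≥ 0 for all n, ξ^(1),…,ξ^(N) ∈ ℝ^D, γ ∈ ℝ, and let U := {ξ ∈ ℝ^D : ∑_{n=1}^N α_n ‖W(ξ − ξ^(n))‖₁ ≤ γ}. Let a ∈ ℝ^D and β ∈ ℝ. Suppose there exist π ∈ ℝ with π ≥ 0 and vectors ρ_1,…,ρ_N, μ_1,…,μ_N ∈ ℝ^D with ρ_n ≥ 0 and μ_n ≥ 0 componentwise, such that ρ_n + μ_n = π α_n 𝟙 for all n (𝟙 the all-ones vector), ∑_{n=1}^N Wᵀ(ρ_n − μ_n) = a, and ∑_{n=1}^N (ρ_n − μ_n)ᵀ W ξ^(n) + π γ ≤ β. Then aᵀξ ≤ β for every ξ ∈ U. (Weak duality: feasibility of the linear dual system certifies the robust constraint.) -/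
/-!
Writing `aᵀξ = ∑ₙ (ρₙ - μₙ)ᵀ W (ξ - ξ⁽ⁿ⁾) + ∑ₙ (ρₙ - μₙ)ᵀ W ξ⁽ⁿ⁾` via `a = ∑ₙ Wᵀ(ρₙ - μₙ)`, it suffices
to bound the first sum by `πγ`. Since `ρₙ, μₙ ≥ 0` and `ρₙ + μₙ = π αₙ 𝟙`, every entry of `ρₙ - μₙ`
has absolute value at most `π αₙ`, so the ℓ∞–ℓ¹ Hölder inequality bounds the `n`-th term by
`π αₙ ‖W(ξ - ξ⁽ⁿ⁾)‖₁`; summing and using `ξ ∈ U`, `π ≥ 0` gives the bound.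
-/

open Matrix

def l1norm {D : ℕ} (v : Fin D → ℝ) : ℝ := ∑ d, |v d|

theorem dotProduct_le_mul_l1norm {D : ℕ} {u v : Fin D → ℝ} {c : ℝ} (hu : ∀ d, |u d| ≤ c) :
    u ⬝ᵥ v ≤ c * l1norm v := by
  rw [l1norm, Finset.mul_sum]
  refine Finset.sum_le_sum fun d _ => ?_
  calc u d * v d ≤ |u d * v d| := le_abs_self _
    _ = |u d| * |v d| := abs_mul _ _
    _ ≤ c * |v d| := mul_le_mul_of_nonneg_right (hu d) (abs_nonneg _)

theorem ocsvc_robust_weak_duality_general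
    {D N : ℕ}
    (W : Matrix (Fin D) (Fin D) ℝ)
    (α : Fin N → ℝ)
    (ξs : Fin N → Fin D → ℝ) (γ : ℝ)
    (a : Fin D → ℝ) (β : ℝ)
    (π : ℝ) (hπ : 0 ≤ π)
    (ρ μ : Fin N → Fin D → ℝ)
    (hρ : ∀ n d, 0 ≤ ρ n d) (hμ : ∀ n d, 0 ≤ μ n d)
    (hρμ : ∀ n d, ρ n d + μ n d = π * α n)
    (heq : ∑ n, W.transpose.mulVec (ρ n - μ n) = a)
    (hobj : ∑ n, (ρ n - μ n) ⬝ᵥ W.mulVec (ξs n) + π * γ ≤ β) :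
    ∀ ξ : Fin D → ℝ, ∑ n, α n * l1norm (W.mulVec (ξ - ξs n)) ≤ γ → a ⬝ᵥ ξ ≤ β := by
  intro ξ hξ
  have hentry : ∀ n d, |(ρ n - μ n) d| ≤ π * α n := fun n d =>
    abs_sub_le_of_nonneg_of_le (hρ n d) (by linarith [hρμ n d, hμ n d])
      (hμ n d) (by linarith [hρμ n d, hρ n d])
  have hsplit : a ⬝ᵥ ξ = ∑ n, (ρ n - μ n) ⬝ᵥ W *ᵥ (ξ - ξs n)
      + ∑ n, (ρ n - μ n) ⬝ᵥ W *ᵥ ξs n := by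
    rw [← heq, sum_dotProduct, ← Finset.sum_add_distrib]
    refine Finset.sum_congr rfl fun n _ => ?_
    rw [mulVec_transpose, ← dotProduct_mulVec, mulVec_sub, dotProduct_sub]
    ring
  have hdeviation : ∑ n, (ρ n - μ n) ⬝ᵥ W *ᵥ (ξ - ξs n) ≤ π * γ :=
    calc ∑ n, (ρ n - μ n) ⬝ᵥ W *ᵥ (ξ - ξs n)
        ≤ ∑ n, π * (α n * l1norm (W *ᵥ (ξ - ξs n))) :=
          Finset.sum_le_sum fun n _ => by
            rw [← mul_assoc]; exact dotProduct_le_mul_l1norm (hentry n)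
      _ = π * ∑ n, α n * l1norm (W *ᵥ (ξ - ξs n)) := (Finset.mul_sum _ _ _).symm
      _ ≤ π * γ := mul_le_mul_of_nonneg_left hξ hπ
  linarith

/-- Weak duality: feasibility of the linear dual system (multipliers `π, ρ_n, μ_n`)
certifies the robust constraint `aᵀξ ≤ β` for every `ξ` in the OC-SVC uncertainty
set `U = {ξ : ∑_n α_n ‖W(ξ - ξ^(n))‖₁ ≤ γ}`. -/
theorem ocsvc_robust_weak_duality
    {D N : ℕ} (hD : 0 < D) (hN : 0 < N)
    (W : Matrix (Fin D) (Fin D) ℝ)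
    (α : Fin N → ℝ) (hα : ∀ n, 0 ≤ α n)
    (ξs : Fin N → Fin D → ℝ) (γ : ℝ)
    (a : Fin D → ℝ) (β : ℝ)
    (π : ℝ) (hπ : 0 ≤ π)
    (ρ μ : Fin N → Fin D → ℝ)
    (hρ : ∀ n d, 0 ≤ ρ n d) (hμ : ∀ n d, 0 ≤ μ n d)
    (hρμ : ∀ n d, ρ n d + μ n d = π * α n)
    (heq : ∑ n, W.transpose.mulVec (ρ n - μ n) = a)
    (hobj : ∑ n, (ρ n - μ n) ⬝ᵥ W.mulVec (ξs n) + π * γ ≤ β) :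
    ∀ ξ : Fin D → ℝ, ∑ n, α n * l1norm (W.mulVec (ξ - ξs n)) ≤ γ → a ⬝ᵥ ξ ≤ β :=
  ocsvc_robust_weak_duality_general W α ξs γ a β π hπ ρ μ hρ hμ hρμ heq hobj
end

section
/- Let D and N be positive integers, W a D×D real matrix, α ∈ ℝ^N with α_n ≥ 0 for all n, ξ^(1),…,ξ^(N) ∈ ℝ^D, γ ∈ ℝ, and let U := {ξ ∈ ℝ^D : ∑_{n=1}^N α_n ‖W(ξ − ξ^(n))‖₁ ≤ γ} be nonempty. Let a ∈ ℝ^D and β ∈ ℝ. Then aᵀξ ≤ β holds for every ξ ∈ U if and only if there exist π ∈ ℝ with π ≥ 0 and vectors ρ_1,…,ρ_N, μ_1,…,μ_N ∈ ℝ^D with ρ_n ≥ 0 and μ_n ≥ 0 componentwise, such that ρ_n + μ_n = π α_n 𝟙 for all n (𝟙 the all-ones vector), ∑_{n=1}^N Wᵀ(ρ_n − μ_n) = a, and ∑_{n=1}^N (ρ_n − μ_n)ᵀ W ξ^(n) + π γ ≤ β. (Strong linear-programming duality: the robust constraint over the OC-SVC uncertainty set admits an exact linear counterpart.) -/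
open Matrix

/-!
Maximizing `aᵀξ` over the uncertainty set `U` is the linear program in `(ξ, υ)` with constraints
`±W (ξ - ξ⁽ⁿ⁾) ≤ υₙ` and `∑ₙ αₙ 𝟙ᵀυₙ ≤ γ`, whose projection onto `ξ` is `U` because `α ≥ 0`.
The theorem is LP duality for this program: the multipliers of the three families of constraints
are `ρₙ`, `μₙ` and `π`, and the dual constraints are exactly the stated conditions. LP duality
itself is the inhomogeneous Farkas lemma, obtained by homogenization from the conic one, which
separates a point from a finitely generated cone; such a cone is closed because, by
Carathéodory's argument, it is a finite union of cones over linearly independent families.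
-/

section Farkas

variable {F : Type*} [AddCommGroup F] [Module ℝ F]

theorem exists_nonneg_coeff_eq_zero_of_not_linearIndependent {ι : Type*} [Fintype ι] {v : ι → F}
    (hv : ¬ LinearIndependent ℝ v) {c : ι → ℝ} (hc : 0 ≤ c) :
    ∃ c' : ι → ℝ, 0 ≤ c' ∧ (∃ j, c' j = 0) ∧ ∑ i, c' i • v i = ∑ i, c i • v i := by
  obtain ⟨g, hg, hpos⟩ : ∃ g : ι → ℝ, ∑ i, g i • v i = 0 ∧ ∃ i, 0 < g i := by
    obtain ⟨g, hg, i, hi⟩ := Fintype.not_linearIndependent_iff.mp hv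
    rcases hi.lt_or_gt with hi | hi
    · exact ⟨-g, by simp [hg], i, by simpa using hi⟩
    · exact ⟨g, hg, i, hi⟩
  classical
  -- move along `-g` until the first coefficient with `g i > 0` vanishes
  obtain ⟨j, hj, hjmin⟩ := Finset.exists_min_image {i | 0 < g i} (fun i => c i / g i)
    (let ⟨i, hi⟩ := hpos; ⟨i, by simpa using hi⟩)
  rw [Finset.mem_filter_univ] at hj
  set t := c j / g j
  refine ⟨c - t • g, fun i => ?_, ⟨j, by simp [t, hj.ne']⟩, ?_⟩
  · rcases lt_or_ge 0 (g i) with hgi | hgi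
    · simpa [sub_nonneg, ← le_div_iff₀ hgi] using hjmin i (by simpa using hgi)
    · have ht : 0 ≤ t := div_nonneg (hc j) hj.le
      have hci : 0 ≤ c i := hc i
      simpa using by nlinarith [mul_nonneg ht (neg_nonneg.2 hgi)]
  · simp [sub_smul, Finset.sum_sub_distrib, mul_smul, ← Finset.smul_sum, hg]

theorem image_linearCombination_Ici_eq_iUnion {ι : Type*} [Fintype ι] [DecidableEq ι]
    {v : ι → F} (hv : ¬ LinearIndependent ℝ v) :
    Fintype.linearCombination ℝ v '' Set.Ici 0 =
      ⋃ j : ι, Fintype.linearCombination ℝ (fun i : {i // i ≠ j} => v ↑i) '' Set.Ici 0 := by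
  ext x
  simp only [Set.mem_image, Set.mem_Ici, Set.mem_iUnion, Fintype.linearCombination_apply]
  constructor
  · rintro ⟨c, hc, rfl⟩
    obtain ⟨c', hc', ⟨j, hj⟩, hsum⟩ := exists_nonneg_coeff_eq_zero_of_not_linearIndependent hv hc
    refine ⟨j, fun i => c' i, fun i => hc' i, ?_⟩
    rw [← hsum, Fintype.sum_eq_add_sum_subtype_ne _ j, hj, zero_smul, zero_add]
  · rintro ⟨j, c, hc, rfl⟩
    refine ⟨fun i => if h : i = j then 0 else c ⟨i, h⟩, fun i => ?_, ?_⟩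
    · by_cases h : i = j
      · simp [h]
      · simpa [h] using hc ⟨i, h⟩
    · rw [Fintype.sum_eq_add_sum_subtype_ne _ j]
      simp [fun i : {i // i ≠ j} => i.2]

theorem isClosed_image_linearCombination_Ici [TopologicalSpace F] [IsTopologicalAddGroup F]
    [ContinuousSMul ℝ F] [T2Space F] {ι : Type*} [Fintype ι] (v : ι → F) :
    IsClosed (Fintype.linearCombination ℝ v '' Set.Ici 0) := by
  classical
  induction h : Fintype.card ι using Nat.strong_induction_on generalizing ι with
  | _ n ih =>
  by_cases hv : LinearIndependent ℝ v
  · exact (LinearMap.isClosedEmbedding_of_injective (LinearMap.ker_eq_bot.mpr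
      hv.fintypeLinearCombination_injective)).isClosedMap _ isClosed_Ici
  · rw [image_linearCombination_Ici_eq_iUnion hv]
    exact isClosed_iUnion_of_finite fun j =>
      ih _ (h ▸ Fintype.card_subtype_lt (p := (· ≠ j)) (not_not.mpr rfl)) _ rfl

variable {ι κ : Type*} [Fintype κ]

theorem Matrix.exists_nonneg_vecMul_eq_of_forall_mulVec_nonneg [Fintype ι] (A : Matrix ι κ ℝ)
    (c : κ → ℝ) (h : ∀ z, 0 ≤ A *ᵥ z → 0 ≤ c ⬝ᵥ z) : ∃ y, 0 ≤ y ∧ y ᵥ* A = c := by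
  classical
  let C : ProperCone ℝ (κ → ℝ) :=
    ⟨(PointedCone.positive ℝ (ι → ℝ)).map (Fintype.linearCombination ℝ A), by
      convert isClosed_image_linearCombination_Ici A
      ext; simp⟩
  have hmem : ∀ u, u ∈ C ↔ ∃ y, 0 ≤ y ∧ y ᵥ* A = u := fun u => by
    simp [C, PointedCone.mem_map, vecMul_eq_sum]
    rfl
  by_contra hc
  obtain ⟨f, hfC, hfc⟩ := C.hyperplane_separation_point fun hcC => hc ((hmem c).mp hcC)
  set z : κ → ℝ := fun k => f (Pi.single k 1)
  have hf : ∀ u, f u = u ⬝ᵥ z := fun u => by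
    conv_lhs => rw [pi_eq_sum_univ' u]
    simp [dotProduct, z]
  have hAz : 0 ≤ A *ᵥ z := fun i => by
    show 0 ≤ A i ⬝ᵥ z
    simpa [hf] using hfC (A i) ((hmem _).mpr ⟨Pi.single i 1, by simp, single_one_vecMul i A⟩)
  exact (hfc.trans_le' ((h z hAz).trans_eq (hf c).symm)).false

theorem le_of_forall_nonneg_add_mul_le {p q p' q' : ℝ}
    (h : ∀ s : ℝ, 0 ≤ s → p + s * q ≤ p' + s * q') : q ≤ q' := by
  by_contra! hlt
  set s := (|p' - p| + 1) / (q - q')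
  have hs : s * (q - q') = |p' - p| + 1 := div_mul_cancel₀ _ (sub_pos.mpr hlt).ne'
  nlinarith [h s (by positivity), le_abs_self (p' - p)]

theorem Matrix.dotProduct_le_mul_of_mulVec_le_smul {A : Matrix ι κ ℝ} {b : ι → ℝ} {c : κ → ℝ}
    {β : ℝ} (hfeas : ∃ x, A *ᵥ x ≤ b) (h : ∀ x, A *ᵥ x ≤ b → c ⬝ᵥ x ≤ β) {z : κ → ℝ} {t : ℝ}
    (ht : 0 ≤ t) (hz : A *ᵥ z ≤ t • b) : c ⬝ᵥ z ≤ t * β := by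
  obtain ⟨x₀, hx₀⟩ := hfeas
  -- the points `(x₀ + s • z) / (1 + s * t)` are feasible; compare slopes as `s → ∞`
  refine le_of_forall_nonneg_add_mul_le (p := c ⬝ᵥ x₀) (p' := β) fun s hs => ?_
  have hr : 0 < 1 + s * t := by positivity
  have hfeas_s : A *ᵥ (1 + s * t)⁻¹ • (x₀ + s • z) ≤ b := fun i => by
    have := hx₀ i
    have := hz i
    simp only [mulVec_smul, mulVec_add, Pi.smul_apply, Pi.add_apply, smul_eq_mul] at *
    rw [inv_mul_le_iff₀ hr]
    nlinarith
  have := h _ hfeas_s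
  simp only [dotProduct_smul, dotProduct_add, smul_eq_mul] at this
  rw [inv_mul_le_iff₀ hr] at this
  linarith

theorem Matrix.exists_nonneg_vecMul_eq_and_dotProduct_le [Fintype ι] {A : Matrix ι κ ℝ}
    {b : ι → ℝ} {c : κ → ℝ} {β : ℝ} (hfeas : ∃ x, A *ᵥ x ≤ b) (h : ∀ x, A *ᵥ x ≤ b → c ⬝ᵥ x ≤ β) :
    ∃ y, 0 ≤ y ∧ y ᵥ* A = c ∧ y ⬝ᵥ b ≤ β := by
  -- the conic lemma for the homogenized system `t • b - A z ≥ 0`, `t ≥ 0` in `(z, t)`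
  obtain ⟨y, hy, hyA⟩ := exists_nonneg_vecMul_eq_of_forall_mulVec_nonneg
    (fromBlocks (-A) (replicateCol Unit b) 0 (1 : Matrix Unit Unit ℝ)) (-c ⊕ᵥ fun _ => β)
    fun z hz => by
      have ht : 0 ≤ z (.inr ()) := by simpa [fromBlocks_mulVec] using hz (.inr ())
      have hAz : A *ᵥ (z ∘ .inl) ≤ z (.inr ()) • b := fun i => by
        simpa [fromBlocks_mulVec, mulVec, dotProduct, mul_comm] using hz (.inl i)
      simpa [dotProduct, Fintype.sum_sum_type, mul_comm] using
        dotProduct_le_mul_of_mulVec_le_smul hfeas h ht hAz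
  rw [vecMul_fromBlocks] at hyA
  have hyAc : y ∘ Sum.inl ᵥ* A = c :=
    funext fun k => by simpa [vecMul_neg] using congrFun hyA (.inl k)
  refine ⟨y ∘ Sum.inl, fun i => hy _, hyAc, ?_⟩
  have hβ := congrFun hyA (.inr ())
  simp [vecMul, dotProduct] at hβ
  simp only [dotProduct, Function.comp_apply]
  linarith [show 0 ≤ y (.inr ()) from hy _]

theorem Matrix.forall_mulVec_le_imp_iff_exists_dual [Fintype ι] {A : Matrix ι κ ℝ} {b : ι → ℝ}
    {c : κ → ℝ} {β : ℝ} (hfeas : ∃ x, A *ᵥ x ≤ b) :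
    (∀ x, A *ᵥ x ≤ b → c ⬝ᵥ x ≤ β) ↔ ∃ y, 0 ≤ y ∧ y ᵥ* A = c ∧ y ⬝ᵥ b ≤ β := by
  refine ⟨exists_nonneg_vecMul_eq_and_dotProduct_le hfeas, ?_⟩
  rintro ⟨y, hy, rfl, hyb⟩ x hx
  rw [← dotProduct_mulVec]
  exact (dotProduct_le_dotProduct_of_nonneg_left hx hy).trans hyb

end Farkas

namespace OCSVC

variable {D : ℕ} {ι : Type*}
variable {W : Matrix (Fin D) (Fin D) ℝ} {α : ι → ℝ} {ξs : ι → Fin D → ℝ} {γ : ℝ}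

variable (W α) in
/-- The rows of this matrix, against `liftedBound`, are the constraints `W (ξ - ξs n) ≤ υ n`,
`-W (ξ - ξs n) ≤ υ n` and `∑ n, α n * 𝟙 ⬝ᵥ υ n ≤ γ` on `(ξ, υ)`, with `υ` uncurried; `liftedDual`
assembles the multipliers of these three families. -/
def liftedMatrix [DecidableEq ι] : Matrix ((ι × Fin D ⊕ ι × Fin D) ⊕ Unit) (Fin D ⊕ ι × Fin D) ℝ :=
  fromBlocks (fromRows (W.submatrix Prod.snd id) (-W.submatrix Prod.snd id))
    (fromRows (-1) (-1)) 0 (replicateRow Unit fun p => α p.1)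

variable (W ξs γ) in
def liftedBound : (ι × Fin D ⊕ ι × Fin D) ⊕ Unit → ℝ :=
  ((fun p => (W *ᵥ ξs p.1) p.2) ⊕ᵥ fun p => -(W *ᵥ ξs p.1) p.2) ⊕ᵥ fun _ => γ

def liftedDual (π : ℝ) (ρ μ : ι → Fin D → ℝ) : (ι × Fin D ⊕ ι × Fin D) ⊕ Unit → ℝ :=
  (Function.uncurry ρ ⊕ᵥ Function.uncurry μ) ⊕ᵥ fun _ => π

theorem exists_eq_liftedDual (y : (ι × Fin D ⊕ ι × Fin D) ⊕ Unit → ℝ) :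
    ∃ π ρ μ, y = liftedDual (D := D) π ρ μ :=
  ⟨y (.inr ()), fun n d => y (.inl (.inl (n, d))), fun n d => y (.inl (.inr (n, d))), by
    ext ((_ | _) | _) <;> rfl⟩

theorem liftedDual_nonneg_iff {π : ℝ} {ρ μ : ι → Fin D → ℝ} :
    0 ≤ liftedDual π ρ μ ↔ 0 ≤ π ∧ (∀ n d, 0 ≤ ρ n d) ∧ (∀ n d, 0 ≤ μ n d) := by
  simp [liftedDual, Pi.le_def, and_comm]

variable [Fintype ι]

theorem sum_mul_l1norm_eq_sum_prod (ξ : Fin D → ℝ) :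
    ∑ n, α n * l1norm (W *ᵥ (ξ - ξs n)) =
      ∑ p : ι × Fin D, α p.1 * |(W *ᵥ (ξ - ξs p.1)) p.2| := by
  simp [l1norm, Fintype.sum_prod_type, Finset.mul_sum]

theorem liftedDual_dotProduct_liftedBound (π : ℝ) (ρ μ : ι → Fin D → ℝ) :
    liftedDual π ρ μ ⬝ᵥ liftedBound W ξs γ = ∑ n, (ρ n - μ n) ⬝ᵥ W *ᵥ ξs n + π * γ := by
  simp [liftedDual, liftedBound, dotProduct, Fintype.sum_sum_type, Fintype.sum_prod_type, sub_mul]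
  ring

variable [DecidableEq ι]

theorem liftedMatrix_mulVec_le_iff {ξ : Fin D → ℝ} {υ : ι × Fin D → ℝ} :
    liftedMatrix W α *ᵥ (ξ ⊕ᵥ υ) ≤ liftedBound W ξs γ ↔
      (∀ p, |(W *ᵥ (ξ - ξs p.1)) p.2| ≤ υ p) ∧ ∑ p, α p.1 * υ p ≤ γ := by
  have hW : ∀ v (p : ι × Fin D), (W.submatrix Prod.snd id *ᵥ v) p = (W *ᵥ v) p.2 :=
    fun _ _ => rfl
  simp [liftedMatrix, liftedBound, fromBlocks_mulVec, fromRows_mulVec, Pi.le_def, neg_mulVec, hW,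
    replicateRow_mulVec_eq_const, abs_le, mulVec_sub, dotProduct]
  grind

theorem exists_liftedMatrix_mulVec_le_iff (hα : ∀ n, 0 ≤ α n) {ξ : Fin D → ℝ} :
    (∃ υ, liftedMatrix W α *ᵥ (ξ ⊕ᵥ υ) ≤ liftedBound W ξs γ) ↔
      ∑ n, α n * l1norm (W *ᵥ (ξ - ξs n)) ≤ γ := by
  simp only [liftedMatrix_mulVec_le_iff, sum_mul_l1norm_eq_sum_prod]
  constructor
  · rintro ⟨υ, hυ, hγ⟩
    exact (Finset.sum_le_sum fun p _ => mul_le_mul_of_nonneg_left (hυ p) (hα p.1)).trans hγ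
  · exact fun h => ⟨_, fun p => le_rfl, h⟩

theorem forall_l1_le_imp_iff_forall_lifted (hα : ∀ n, 0 ≤ α n) {a : Fin D → ℝ} {β : ℝ} :
    (∀ ξ, ∑ n, α n * l1norm (W *ᵥ (ξ - ξs n)) ≤ γ → a ⬝ᵥ ξ ≤ β) ↔
      ∀ x, liftedMatrix W α *ᵥ x ≤ liftedBound W ξs γ → (a ⊕ᵥ 0) ⬝ᵥ x ≤ β := by
  simp_rw [← exists_liftedMatrix_mulVec_le_iff hα]
  refine ⟨fun h x hx => ?_, fun h ξ ⟨υ, hυ⟩ => by simpa [sumElim_dotProduct_sumElim] using h _ hυ⟩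
  obtain ⟨ξ, υ, rfl⟩ : ∃ ξ υ, x = ξ ⊕ᵥ υ := ⟨_, _, (Sum.elim_comp_inl_inr x).symm⟩
  simpa [sumElim_dotProduct_sumElim] using h _ ⟨_, hx⟩

theorem liftedDual_vecMul_liftedMatrix (π : ℝ) (ρ μ : ι → Fin D → ℝ) :
    liftedDual π ρ μ ᵥ* liftedMatrix W α =
      (∑ n, Wᵀ *ᵥ (ρ n - μ n)) ⊕ᵥ fun p => π * α p.1 - ρ p.1 p.2 - μ p.1 p.2 := by
  ext (e | ⟨n, d⟩)
  · simp only [liftedDual, liftedMatrix, vecMul_fromBlocks, vecMul_fromRows, vecMul_neg]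
    simp [vecMul, mulVec, dotProduct, Fintype.sum_prod_type, mul_sub, mul_comm]
    ring
  · simp only [liftedDual, liftedMatrix, vecMul_fromBlocks, vecMul_fromRows, vecMul_neg, vecMul_one]
    simp [vecMul, dotProduct]
    ring

theorem exists_dual_iff {a : Fin D → ℝ} {β : ℝ} :
    (∃ y, 0 ≤ y ∧ y ᵥ* liftedMatrix W α = a ⊕ᵥ 0 ∧ y ⬝ᵥ liftedBound W ξs γ ≤ β) ↔
      ∃ (π : ℝ) (ρ μ : ι → Fin D → ℝ), 0 ≤ π ∧ (∀ n d, 0 ≤ ρ n d) ∧ (∀ n d, 0 ≤ μ n d) ∧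
        (∀ n d, ρ n d + μ n d = π * α n) ∧ (∑ n, Wᵀ *ᵥ (ρ n - μ n) = a) ∧
        (∑ n, (ρ n - μ n) ⬝ᵥ W *ᵥ ξs n + π * γ ≤ β) := by
  constructor
  · rintro ⟨y, hy, hyA, hyb⟩
    obtain ⟨π, ρ, μ, rfl⟩ := exists_eq_liftedDual y
    obtain ⟨hπ, hρ, hμ⟩ := liftedDual_nonneg_iff.mp hy
    rw [liftedDual_vecMul_liftedMatrix, Sum.elim_eq_iff] at hyA
    rw [liftedDual_dotProduct_liftedBound] at hyb
    refine ⟨π, ρ, μ, hπ, hρ, hμ, fun n d => ?_, hyA.1, hyb⟩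
    have := congrFun hyA.2 (n, d)
    simp only [Pi.zero_apply] at this
    linarith
  · rintro ⟨π, ρ, μ, hπ, hρ, hμ, hρμ, ha, hβ⟩
    refine ⟨liftedDual π ρ μ, liftedDual_nonneg_iff.mpr ⟨hπ, hρ, hμ⟩, ?_,
      by rwa [liftedDual_dotProduct_liftedBound]⟩
    rw [liftedDual_vecMul_liftedMatrix, ha]
    congr
    ext ⟨n, d⟩
    simp only [Pi.zero_apply]
    linarith [hρμ n d]

end OCSVC

theorem ocsvc_robust_strong_duality_general
    {D N : ℕ}
    (W : Matrix (Fin D) (Fin D) ℝ)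
    (α : Fin N → ℝ) (hα : ∀ n, 0 ≤ α n)
    (ξs : Fin N → Fin D → ℝ) (γ : ℝ)
    (hU : {ξ : Fin D → ℝ | ∑ n, α n * l1norm (W.mulVec (ξ - ξs n)) ≤ γ}.Nonempty)
    (a : Fin D → ℝ) (β : ℝ) :
    (∀ ξ : Fin D → ℝ, ∑ n, α n * l1norm (W.mulVec (ξ - ξs n)) ≤ γ → a ⬝ᵥ ξ ≤ β)
      ↔ ∃ (π : ℝ) (ρ μ : Fin N → Fin D → ℝ),
          0 ≤ π ∧
          (∀ n d, 0 ≤ ρ n d) ∧ (∀ n d, 0 ≤ μ n d) ∧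
          (∀ n d, ρ n d + μ n d = π * α n) ∧
          (∑ n, W.transpose.mulVec (ρ n - μ n) = a) ∧
          (∑ n, (ρ n - μ n) ⬝ᵥ W.mulVec (ξs n) + π * γ ≤ β) := by
  obtain ⟨ξ₀, hξ₀⟩ := hU
  obtain ⟨υ₀, hυ₀⟩ := (OCSVC.exists_liftedMatrix_mulVec_le_iff hα).mpr hξ₀
  rw [OCSVC.forall_l1_le_imp_iff_forall_lifted hα,
    Matrix.forall_mulVec_le_imp_iff_exists_dual ⟨_, hυ₀⟩, OCSVC.exists_dual_iff]

/-- Strong linear-programming duality: for a nonempty OC-SVC uncertainty set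
`U = {ξ : ∑_n α_n ‖W(ξ - ξ^(n))‖₁ ≤ γ}`, the robust constraint `aᵀξ ≤ β` for all
`ξ ∈ U` holds iff the linear dual system in the multipliers `π, ρ_n, μ_n` is
feasible. -/
theorem ocsvc_robust_strong_duality
    {D N : ℕ} (hD : 0 < D) (hN : 0 < N)
    (W : Matrix (Fin D) (Fin D) ℝ)
    (α : Fin N → ℝ) (hα : ∀ n, 0 ≤ α n)
    (ξs : Fin N → Fin D → ℝ) (γ : ℝ)
    (hU : {ξ : Fin D → ℝ | ∑ n, α n * l1norm (W.mulVec (ξ - ξs n)) ≤ γ}.Nonempty)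
    (a : Fin D → ℝ) (β : ℝ) :
    (∀ ξ : Fin D → ℝ, ∑ n, α n * l1norm (W.mulVec (ξ - ξs n)) ≤ γ → a ⬝ᵥ ξ ≤ β)
      ↔ ∃ (π : ℝ) (ρ μ : Fin N → Fin D → ℝ),
          0 ≤ π ∧
          (∀ n d, 0 ≤ ρ n d) ∧ (∀ n d, 0 ≤ μ n d) ∧
          (∀ n d, ρ n d + μ n d = π * α n) ∧
          (∑ n, W.transpose.mulVec (ρ n - μ n) = a) ∧
          (∑ n, (ρ n - μ n) ⬝ᵥ W.mulVec (ξs n) + π * γ ≤ β) :=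
  ocsvc_robust_strong_duality_general W α hα ξs γ hU a β
end
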